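/- Let 𝔸 be an algebra, n ≥ 2, and θ_0, …, θ_{n−1} congruences. Then the hypercommutator satisfies: (1) [θ_0,…,θ_{n−1}]_H ≤ ⋀_{i∈n} θ_i; (2) monotonicity: if θ_i ≤ γ_i for all i then [θ_0,…,θ_{n−1}]_H ≤ [γ_0,…,γ_{n−1}]_H; (3) [θ_0,…,θ_{n−1}]_H ≤ [θ_1,…,θ_{n−1}]_H; and (4) the term condition commutator satisfies [θ_0,…,θ_{n−1}]_TC ≤ [θ_0,…,θ_{n−1}]_H. -/

import Mathlib

universe u v

structure Signature : Type 1 where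
  ops : Type
  arity : ops → ℕ

class Alg (σ : Signature) (A : Type u) : Type u where
  interp : ∀ o : σ.ops, (Fin (σ.arity o) → A) → A

/-- A labeled `S`-dimensional cube with vertices labeled by elements of `A`. -/
abbrev Cube (S : Type v) (A : Type u) : Type (max u v) := (S → Bool) → A

section Defs

variable {A : Type u} {B : Type u} {S : Type v}

def Quasireflexive (R : Set (B × B)) : Prop :=
  ∀ a b : B, (a, b) ∈ R → (a, a) ∈ R ∧ (b, b) ∈ R

def SymmRel (R : Set (B × B)) : Prop := ∀ a b : B, (a, b) ∈ R → (b, a) ∈ R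

def TransRel (R : Set (B × B)) : Prop :=
  ∀ a b c : B, (a, b) ∈ R → (b, c) ∈ R → (a, c) ∈ R

def face [DecidableEq S] (i : S) (b : Bool) (γ : Cube S A) : Cube {x : S // x ≠ i} A :=
  fun f => γ fun j => if h : j = i then b else f ⟨j, h⟩

def facesRel [DecidableEq S] (i : S) (R : Set (Cube S A)) :
    Set (Cube {x : S // x ≠ i} A × Cube {x : S // x ≠ i} A) :=
  {p | ∃ γ ∈ R, p = (face i false γ, face i true γ)}

def SRefl [DecidableEq S] (R : Set (Cube S A)) : Prop := ∀ i : S, Quasireflexive (facesRel i R)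
def SSymm [DecidableEq S] (R : Set (Cube S A)) : Prop := ∀ i : S, SymmRel (facesRel i R)
def STrans [DecidableEq S] (R : Set (Cube S A)) : Prop := ∀ i : S, TransRel (facesRel i R)

def glue (i : S) (a b : Cube {x : S // x ≠ i} A) : Cube S A :=
  fun f => if f i then b (fun j => f j.val) else a (fun j => f j.val)

def reflMap [DecidableEq S] (i : S) (b : Bool) (γ : Cube S A) : Cube S A :=
  glue i (face i b γ) (face i b γ)

def symMap [DecidableEq S] (i : S) (γ : Cube S A) : Cube S A :=
  glue i (face i true γ) (face i false γ)

def cut (Q : Set S) [DecidablePred (· ∈ Q)] (γ : Cube S A) :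
    Cube {x : S // x ∈ Q} (Cube {x : S // x ∉ Q} A) :=
  fun f g => γ fun j => if h : j ∈ Q then f ⟨j, h⟩ else g ⟨j, h⟩

def cutProj (Q : Set S) [DecidablePred (· ∈ Q)] (R : Set (Cube S A))
    (f : {x : S // x ∈ Q} → Bool) : Set (Cube {x : S // x ∉ Q} A) :=
  (fun γ => cut Q γ f) '' R

variable (σ : Signature)

def CompatCube [Alg σ A] (R : Set (Cube S A)) : Prop :=
  ∀ (o : σ.ops) (γ : Fin (σ.arity o) → Cube S A), (∀ k, γ k ∈ R) →
    (fun f => Alg.interp (A := A) o fun k => γ k f) ∈ R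

def CompatRel [Alg σ A] (θ : Set (A × A)) : Prop :=
  ∀ (o : σ.ops) (x y : Fin (σ.arity o) → A), (∀ k, (x k, y k) ∈ θ) →
    (Alg.interp (A := A) o x, Alg.interp (A := A) o y) ∈ θ

def IsCongruence [Alg σ A] (θ : Set (A × A)) : Prop :=
  (∀ a : A, (a, a) ∈ θ) ∧ SymmRel θ ∧ TransRel θ ∧ CompatRel σ θ

def IsTolerance [Alg σ A] [DecidableEq S] (R : Set (Cube S A)) : Prop :=
  CompatCube σ R ∧ SRefl R ∧ SSymm R

def IsHCongruence [Alg σ A] [DecidableEq S] (R : Set (Cube S A)) : Prop :=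
  IsTolerance σ R ∧ STrans R

def subalgGen [Alg σ A] (X : Set (Cube S A)) : Set (Cube S A) :=
  ⋂₀ {R : Set (Cube S A) | CompatCube σ R ∧ X ⊆ R}

def tolGen [Alg σ A] [DecidableEq S] (X : Set (Cube S A)) : Set (Cube S A) :=
  ⋂₀ {R : Set (Cube S A) | IsTolerance σ R ∧ X ⊆ R}

def congGen [Alg σ A] [DecidableEq S] (X : Set (Cube S A)) : Set (Cube S A) :=
  ⋂₀ {R : Set (Cube S A) | IsHCongruence σ R ∧ X ⊆ R}

def cubeAt (i : S) (p : A × A) : Cube S A := fun f => bif f i then p.2 else p.1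

def cubeSet (i : S) (θ : Set (A × A)) : Set (Cube S A) := cubeAt i '' θ

def MRel [Alg σ A] [DecidableEq S] (θ : S → Set (A × A)) : Set (Cube S A) :=
  tolGen σ (⋃ i : S, cubeSet i (θ i))

def DeltaRel [Alg σ A] [DecidableEq S] (θ : S → Set (A × A)) : Set (Cube S A) :=
  congGen σ (⋃ i : S, cubeSet i (θ i))

def rectRel [DecidableEq S] (θ : S → Set (A × A)) : Set (Cube S A) :=
  {γ | ∀ (i : S) (f : {x : S // x ≠ i} → Bool), (face i false γ f, face i true γ f) ∈ θ i}

def dirClosure [DecidableEq S] (i : S) (R : Set (Cube S A)) : Set (Cube S A) :=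
  {γ | Relation.TransGen (fun a b : Cube {x : S // x ≠ i} A => (a, b) ∈ facesRel i R)
      (face i false γ) (face i true γ)}

def Centrality [DecidableEq S] [Fintype S] (δ : Set (A × A)) (i : S)
    (R : Set (Cube S A)) : Prop :=
  ¬ ∃ γ ∈ R, Nat.card {f : {x : S // x ≠ i} → Bool //
      (face i false γ f, face i true γ f) ∈ δ} = 2 ^ (Fintype.card S - 1) - 1

end Defs

def finMod (n : ℕ) [NeZero n] (j : ℕ) : Fin n :=
  ⟨j % n, Nat.mod_lt _ (Nat.pos_of_ne_zero (NeZero.ne n))⟩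

def tcSeq {A : Type u} {n : ℕ} [NeZero n] (Y : Set (Cube (Fin n) A)) :
    ℕ → Set (Cube (Fin n) A)
  | 0 => dirClosure (finMod n 0) Y
  | j + 1 => dirClosure (finMod n (j + 1)) (tcSeq Y j)

def tcClosure {A : Type u} {n : ℕ} [NeZero n] (Y : Set (Cube (Fin n) A)) :
    Set (Cube (Fin n) A) := ⋃ j : ℕ, tcSeq Y j

def lastIdx (n : ℕ) [NeZero n] : Fin n :=
  ⟨n - 1, Nat.sub_lt (Nat.pos_of_ne_zero (NeZero.ne n)) Nat.one_pos⟩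

def tcComm (σ : Signature) {A : Type u} [Alg σ A] (n : ℕ) [NeZero n]
    (θ : Fin n → Set (A × A)) : Set (A × A) :=
  ⋂₀ {δ : Set (A × A) | IsCongruence σ δ ∧ Centrality δ (lastIdx n) (MRel σ θ)}

def hComm (σ : Signature) {A : Type u} [Alg σ A] (n : ℕ) [NeZero n]
    (θ : Fin n → Set (A × A)) : Set (A × A) :=
  ⋂₀ {δ : Set (A × A) | IsCongruence σ δ ∧ Centrality δ (lastIdx n) (DeltaRel σ θ)}

inductive Term (σ : Signature) (k : ℕ) : Type
  | var : Fin k → Term σ k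
  | app : (o : σ.ops) → (Fin (σ.arity o) → Term σ k) → Term σ k

def Term.eval {σ : Signature} {k : ℕ} {A : Type u} [Alg σ A] :
    Term σ k → (Fin k → A) → A
  | .var i, v => v i
  | .app o ts, v => Alg.interp (A := A) o fun j => (ts j).eval v

def IsTaylorAlg (σ : Signature) (A : Type u) [Alg σ A] : Prop :=
  ∃ (m : ℕ) (t : Term σ (m + 1)),
    (∀ a : A, t.eval (fun _ => a) = a) ∧
    ∀ e : Fin (m + 1), ∃ u v : Fin (m + 1) → Bool, u e = false ∧ v e = true ∧
      ∀ x y : A, t.eval (fun i => bif u i then y else x)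
               = t.eval (fun i => bif v i then y else x)

open Classical in
noncomputable def comCube {A : Type u} (n : ℕ) (x y : A) : Cube (Fin n) A :=
  fun f => if ∀ i, f i = true then y else x

def iSupported {A : Type u} {S : Type v} [DecidableEq S] (i : S) (γ : Cube S A)
    (x y : A) : Prop :=
  face i false γ (fun _ => true) = x ∧ face i true γ (fun _ => true) = y ∧
  ∀ f : {z : S // z ≠ i} → Bool, f ≠ (fun _ => true) →
    face i false γ f = face i true γ f

def sqCube {A : Type u} (a b c d : A) : Cube (Fin 2) A :=
  fun f => if f 0 then (if f 1 then d else c) else (if f 1 then b else a)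

def lcs (σ : Signature) {A : Type u} [Alg σ A] (θ : Set (A × A)) : ℕ → Set (A × A)
  | 0 => θ
  | n + 1 => tcComm σ 2 ![θ, lcs σ θ n]

def diagRel (A : Type u) : Set (A × A) := {p : A × A | p.1 = p.2}

/-!
Every generating cube of `Δ(θ)` has all its `i`-lines in `θ i`, and for a congruence `δ` the
cubes whose `i`-lines all lie in `δ` form an `n`-dimensional congruence; hence every cube of
`Δ(θ)` has all its `i`-lines in `θ i`. Such a cube has no `(n-1)`-line outside `θ i` when
`i = n - 1`, and otherwise flipping the `i`-th coordinate pairs up its `(n-1)`-lines outside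
`θ i`; either way `θ i` is central, which bounds `[θ]_H` by every `θ i`.

Since `M(θ) ⊆ Δ(θ)`, both grow with `θ`, and centrality passes to subrelations, we get
`[θ]_TC ≤ [θ]_H` and monotonicity. For dropping `θ 0`: the `0`-faces of cubes of `Δ(θ)`
(resp. `M(θ)`) lie in `Δ(θ ∘ succ)` (resp. `M(θ ∘ succ)`), and a cube with exactly one
`(n-1)`-line outside `δ` has a `0`-face with exactly one such line.
-/

open Function

section Vertices
variable {A : Type u} {S : Type v} [DecidableEq S]

theorem face_restrict (i : S) (b : Bool) (γ : Cube S A) (g : S → Bool) :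
    face i b γ (Subtype.restrict _ g) = γ (update g i b) := by
  simp only [face, Subtype.restrict]
  congr 1
  funext j
  by_cases h : j = i <;> simp [h]

theorem restrict_surjective (i : S) :
    Surjective (Subtype.restrict (· ≠ i) : (S → Bool) → ({x : S // x ≠ i} → Bool)) :=
  fun f => ⟨fun j => if h : j = i then false else f ⟨j, h⟩, by
    funext j; simp [Subtype.restrict, j.2]⟩

theorem face_eq_face_iff {i : S} {u w : Bool} {γ₁ γ₂ : Cube S A} :
    face i u γ₁ = face i w γ₂ ↔ ∀ g, γ₁ (update g i u) = γ₂ (update g i w) := by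
  simp only [funext_iff, (restrict_surjective i).forall, face_restrict]

theorem glue_face_face_apply (i : S) (u w : Bool) (γ₁ γ₂ : Cube S A) (g : S → Bool) :
    glue i (face i u γ₁) (face i w γ₂) g =
      if g i then γ₂ (update g i w) else γ₁ (update g i u) := by
  simp only [glue, ← face_restrict]
  rfl

theorem face_glue (i : S) (b : Bool) (a₀ a₁ : Cube {x : S // x ≠ i} A) :
    face i b (glue i a₀ a₁) = bif b then a₁ else a₀ := by
  funext f
  have hrestrict : (fun j : {x : S // x ≠ i} => if h : (j : S) = i then b else f ⟨j, h⟩) = f :=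
    funext fun j => dif_neg j.2
  cases b <;> simp only [face, glue, dite_true, hrestrict] <;> rfl

theorem glue_face (i : S) (γ : Cube S A) : glue i (face i false γ) (face i true γ) = γ := by
  funext g
  rw [glue_face_face_apply]
  cases hg : g i
  · rw [if_neg Bool.false_ne_true, ← hg, update_eq_self]
  · rw [if_pos rfl, ← hg, update_eq_self]

def crossLine (i : S) (γ : Cube S A) (g : S → Bool) : A × A :=
  (γ (update g i false), γ (update g i true))

def linesIn (i : S) (δ : Set (A × A)) : Set (Cube S A) :=
  {γ | ∀ g, crossLine i γ g ∈ δ}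

theorem crossLine_glue_self (i : S) (u w : Bool) (γ₁ γ₂ : Cube S A) (g : S → Bool) :
    crossLine i (glue i (face i u γ₁) (face i w γ₂)) g =
      (γ₁ (update g i u), γ₂ (update g i w)) := by
  simp [crossLine, glue_face_face_apply]

theorem crossLine_glue_of_ne {i k : S} (hk : k ≠ i) (u w : Bool) (γ₁ γ₂ : Cube S A)
    (g : S → Bool) :
    crossLine i (glue k (face k u γ₁) (face k w γ₂)) g =
      if g k then crossLine i γ₂ (update g k w) else crossLine i γ₁ (update g k u) := by
  simp only [crossLine, glue_face_face_apply, update_of_ne hk, update_comm hk]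
  split_ifs <;> rfl

end Vertices

section Closure
variable {A : Type u} {S : Type v} [DecidableEq S] {R : Set (Cube S A)}

theorem mem_facesRel_iff {i : S} {a₀ a₁ : Cube {x : S // x ≠ i} A} :
    (a₀, a₁) ∈ facesRel i R ↔ glue i a₀ a₁ ∈ R := by
  constructor
  · rintro ⟨γ, hγ, h⟩
    obtain ⟨rfl, rfl⟩ := Prod.mk.inj h
    rwa [glue_face]
  · exact fun h => ⟨_, h, by simp [face_glue]⟩

theorem face_mem_facesRel {i : S} {γ : Cube S A} (hγ : γ ∈ R) :
    (face i false γ, face i true γ) ∈ facesRel i R :=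
  ⟨γ, hγ, rfl⟩

theorem sRefl_iff : SRefl R ↔ ∀ i b, ∀ γ ∈ R, reflMap i b γ ∈ R := by
  constructor
  · intro h i b γ hγ
    have := h i _ _ (face_mem_facesRel hγ)
    cases b
    · exact mem_facesRel_iff.1 this.1
    · exact mem_facesRel_iff.1 this.2
  · rintro h i _ _ ⟨γ, hγ, hp⟩
    obtain ⟨rfl, rfl⟩ := Prod.mk.inj hp
    exact ⟨mem_facesRel_iff.2 (h i false γ hγ), mem_facesRel_iff.2 (h i true γ hγ)⟩

theorem sSymm_iff : SSymm R ↔ ∀ i, ∀ γ ∈ R, symMap i γ ∈ R := by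
  constructor
  · exact fun h i γ hγ => mem_facesRel_iff.1 (h i _ _ (face_mem_facesRel hγ))
  · rintro h i _ _ ⟨γ, hγ, hp⟩
    obtain ⟨rfl, rfl⟩ := Prod.mk.inj hp
    exact mem_facesRel_iff.2 (h i γ hγ)

theorem sTrans_iff : STrans R ↔ ∀ i, ∀ γ₁ ∈ R, ∀ γ₂ ∈ R, face i true γ₁ = face i false γ₂ →
    glue i (face i false γ₁) (face i true γ₂) ∈ R := by
  constructor
  · intro h i γ₁ hγ₁ γ₂ hγ₂ hface
    have h₁ := face_mem_facesRel (i := i) hγ₁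
    rw [hface] at h₁
    exact mem_facesRel_iff.1 (h i _ _ _ h₁ (face_mem_facesRel hγ₂))
  · rintro h i _ _ _ ⟨γ₁, hγ₁, h₁⟩ ⟨γ₂, hγ₂, h₂⟩
    obtain ⟨rfl, rfl⟩ := Prod.mk.inj h₁
    obtain ⟨hmid, rfl⟩ := Prod.mk.inj h₂
    exact mem_facesRel_iff.2 (h i γ₁ hγ₁ γ₂ hγ₂ hmid)

end Closure

theorem iUnion_cubeSet_mono {A : Type u} {S : Type v} {θ θ' : S → Set (A × A)}
    (h : ∀ i, θ i ⊆ θ' i) : ⋃ i, cubeSet i (θ i) ⊆ ⋃ i, cubeSet (A := A) i (θ' i) :=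
  Set.iUnion_mono fun i => Set.image_mono (h i)

section Generated
variable {A : Type u} {S : Type v} [DecidableEq S] (σ : Signature) [Alg σ A]

theorem IsTolerance.sInter {𝒮 : Set (Set (Cube S A))} (h : ∀ R ∈ 𝒮, IsTolerance σ R) :
    IsTolerance σ (⋂₀ 𝒮) :=
  ⟨fun o γ hγ R hR => (h R hR).1 o γ fun k => hγ k R hR,
    sRefl_iff.2 fun i b γ hγ R hR => sRefl_iff.1 (h R hR).2.1 i b γ (hγ R hR),
    sSymm_iff.2 fun i γ hγ R hR => sSymm_iff.1 (h R hR).2.2 i γ (hγ R hR)⟩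

theorem IsHCongruence.sInter {𝒮 : Set (Set (Cube S A))} (h : ∀ R ∈ 𝒮, IsHCongruence σ R) :
    IsHCongruence σ (⋂₀ 𝒮) :=
  ⟨IsTolerance.sInter σ fun R hR => (h R hR).1,
    sTrans_iff.2 fun i γ₁ hγ₁ γ₂ hγ₂ hface R hR =>
      sTrans_iff.1 (h R hR).2 i γ₁ (hγ₁ R hR) γ₂ (hγ₂ R hR) hface⟩

theorem isTolerance_tolGen (X : Set (Cube S A)) : IsTolerance σ (tolGen σ X) :=
  IsTolerance.sInter σ fun _ hR => hR.1

theorem isHCongruence_congGen (X : Set (Cube S A)) : IsHCongruence σ (congGen σ X) :=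
  IsHCongruence.sInter σ fun _ hR => hR.1

theorem subset_tolGen (X : Set (Cube S A)) : X ⊆ tolGen σ X :=
  fun _ hγ _ hR => hR.2 hγ

theorem subset_congGen (X : Set (Cube S A)) : X ⊆ congGen σ X :=
  fun _ hγ _ hR => hR.2 hγ

theorem tolGen_subset {X R : Set (Cube S A)} (hR : IsTolerance σ R) (hX : X ⊆ R) :
    tolGen σ X ⊆ R :=
  Set.sInter_subset_of_mem ⟨hR, hX⟩

theorem congGen_subset {X R : Set (Cube S A)} (hR : IsHCongruence σ R) (hX : X ⊆ R) :
    congGen σ X ⊆ R :=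
  Set.sInter_subset_of_mem ⟨hR, hX⟩

theorem MRel_subset_DeltaRel (θ : S → Set (A × A)) : MRel σ θ ⊆ DeltaRel σ θ :=
  tolGen_subset σ (isHCongruence_congGen σ _).1 (subset_congGen σ _)

theorem MRel_mono {θ θ' : S → Set (A × A)} (h : ∀ i, θ i ⊆ θ' i) : MRel σ θ ⊆ MRel σ θ' :=
  tolGen_subset σ (isTolerance_tolGen σ _) ((iUnion_cubeSet_mono h).trans (subset_tolGen σ _))

theorem DeltaRel_mono {θ θ' : S → Set (A × A)} (h : ∀ i, θ i ⊆ θ' i) :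
    DeltaRel σ θ ⊆ DeltaRel σ θ' :=
  congGen_subset σ (isHCongruence_congGen σ _)
    ((iUnion_cubeSet_mono h).trans (subset_congGen σ _))

theorem isHCongruence_linesIn {δ : Set (A × A)} (hδ : IsCongruence σ δ) (i : S) :
    IsHCongruence σ (linesIn i δ) := by
  obtain ⟨hrefl, hsymm, htrans, hcompat⟩ := hδ
  have glue_mem : ∀ k, k ≠ i → ∀ u w, ∀ γ₁ ∈ linesIn i δ, ∀ γ₂ ∈ linesIn i δ,
      glue k (face k u γ₁) (face k w γ₂) ∈ linesIn i δ := by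
    intro k hk u w γ₁ hγ₁ γ₂ hγ₂ g
    rw [crossLine_glue_of_ne hk]
    split_ifs
    exacts [hγ₂ _, hγ₁ _]
  refine ⟨⟨fun o γ hγ g => hcompat o _ _ fun k => hγ k g, sRefl_iff.2 ?_, sSymm_iff.2 ?_⟩,
    sTrans_iff.2 ?_⟩
  · intro k b γ hγ
    obtain rfl | hk := eq_or_ne k i
    · intro g
      rw [reflMap, crossLine_glue_self]
      exact hrefl _
    · exact glue_mem k hk b b γ hγ γ hγ
  · intro k γ hγ
    obtain rfl | hk := eq_or_ne k i
    · intro g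
      rw [symMap, crossLine_glue_self]
      exact hsymm _ _ (hγ g)
    · exact glue_mem k hk true false γ hγ γ hγ
  · intro k γ₁ hγ₁ γ₂ hγ₂ hface
    obtain rfl | hk := eq_or_ne k i
    · intro g
      rw [crossLine_glue_self]
      exact htrans _ _ _ (hγ₁ g) (face_eq_face_iff.1 hface g ▸ hγ₂ g)
    · exact glue_mem k hk false true γ₁ hγ₁ γ₂ hγ₂

theorem DeltaRel_subset_linesIn {θ : S → Set (A × A)} (hθ : ∀ i, IsCongruence σ (θ i))
    (i : S) : DeltaRel σ θ ⊆ linesIn i (θ i) := by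
  refine congGen_subset σ (isHCongruence_linesIn σ (hθ i) i) ?_
  simp only [Set.iUnion_subset_iff, cubeSet, Set.image_subset_iff]
  intro j p hp g
  obtain rfl | hj := eq_or_ne j i
  · simpa [crossLine, cubeAt] using hp
  · simpa [crossLine, cubeAt, update_of_ne hj] using (hθ i).1 _

end Generated

theorem natCard_subtype_eq_card_sub_one_iff {α : Type*} [Fintype α] [Nonempty α]
    (P : α → Prop) : Nat.card {x // P x} = Fintype.card α - 1 ↔ ∃! x, ¬P x := by
  classical
  rw [Fintype.existsUnique_iff_card_one, Nat.card_eq_fintype_card, Fintype.card_subtype]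
  have := Finset.card_filter_add_card_filter_not (s := Finset.univ) (fun x => P x)
  have := Fintype.card_pos (α := α)
  rw [Finset.card_univ] at *
  omega

section Centrality
variable {A : Type u} {S : Type v} [DecidableEq S]

theorem card_restrict_ne [Fintype S] (k : S) :
    Fintype.card ({x : S // x ≠ k} → Bool) = 2 ^ (Fintype.card S - 1) := by
  rw [Fintype.card_fun, Fintype.card_bool, Fintype.card_subtype_compl, Fintype.card_subtype_eq]

theorem not_centrality_iff [Fintype S] {δ : Set (A × A)} {k : S} {R : Set (Cube S A)} :
    ¬Centrality δ k R ↔ ∃ γ ∈ R, ∃ g, crossLine k γ g ∉ δ ∧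
      ∀ g', crossLine k γ g' ∉ δ → Subtype.restrict (· ≠ k) g' = Subtype.restrict (· ≠ k) g := by
  simp only [Centrality, not_not, ← card_restrict_ne k, natCard_subtype_eq_card_sub_one_iff,
    ExistsUnique, (restrict_surjective k).exists, (restrict_surjective k).forall, face_restrict]
  rfl

theorem Centrality.anti [Fintype S] {δ : Set (A × A)} {k : S} {R₁ R₂ : Set (Cube S A)}
    (h : R₁ ⊆ R₂) (hc : Centrality δ k R₂) : Centrality δ k R₁ :=
  fun ⟨γ, hγ, hcard⟩ => hc ⟨γ, h hγ, hcard⟩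

theorem rel_update_of_mem_linesIn {δ : Set (A × A)} (hrefl : ∀ a, (a, a) ∈ δ)
    (hsymm : SymmRel δ) {i : S} {γ : Cube S A} (hγ : γ ∈ linesIn i δ) (g : S → Bool)
    (x : Bool) : (γ g, γ (update g i x)) ∈ δ := by
  have hline : (γ (update g i false), γ (update g i true)) ∈ δ := hγ g
  rw [show γ g = γ (update g i (g i)) by rw [update_eq_self]]
  cases g i <;> cases x
  exacts [hrefl _, hline, hsymm _ _ hline, hrefl _]

/-- For `i ≠ k`, flipping the `i`-th coordinate is a fixed-point-free involution on the
`k`-lines which preserves membership in `δ`, so the `k`-lines outside `δ` never form a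
singleton. -/
theorem centrality_of_subset_linesIn [Fintype S] {δ : Set (A × A)} (hrefl : ∀ a, (a, a) ∈ δ)
    (hsymm : SymmRel δ) (htrans : TransRel δ) {i k : S} {R : Set (Cube S A)}
    (hR : R ⊆ linesIn i δ) : Centrality δ k R := by
  intro hc
  obtain ⟨γ, hγ, g, hg, huniq⟩ := not_centrality_iff.1 (not_not.2 hc)
  obtain rfl | hik := eq_or_ne i k
  · exact hg (hR hγ g)
  set g' := update g i (!g i)
  have hflip : ∀ c, (γ (update g k c), γ (update g' k c)) ∈ δ := fun c => by
    rw [update_comm hik]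
    exact rel_update_of_mem_linesIn hrefl hsymm (hR hγ) _ _
  have hg' : crossLine k γ g' ∉ δ := fun hline =>
    hg (htrans _ _ _ (hflip false) (htrans _ _ _ hline (hsymm _ _ (hflip true))))
  have := congrFun (huniq g' hg') ⟨i, hik⟩
  simp [g', Subtype.restrict] at this

end Centrality

section FaceZero
variable {A : Type u} {n : ℕ}

def faceZero (b : Bool) (γ : Cube (Fin (n + 1)) A) : Cube (Fin n) A :=
  fun g => γ (Fin.cons b g)

theorem crossLine_faceZero (k : Fin n) (b : Bool) (γ : Cube (Fin (n + 1)) A)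
    (g : Fin n → Bool) : crossLine k (faceZero b γ) g = crossLine k.succ γ (Fin.cons b g) := by
  simp [crossLine, faceZero, Fin.cons_update]

theorem centrality_of_faceZero {δ : Set (A × A)} {k : Fin n} {R : Set (Cube (Fin (n + 1)) A)}
    {R' : Set (Cube (Fin n) A)} (hface : ∀ γ ∈ R, ∀ b, faceZero b γ ∈ R')
    (hc : Centrality δ k R') : Centrality δ k.succ R := by
  intro hc'
  obtain ⟨γ, hγ, g, hg, huniq⟩ := not_centrality_iff.1 (not_not.2 hc')
  refine not_centrality_iff.2 ⟨faceZero (g 0) γ, hface γ hγ _, Fin.tail g, ?_, fun g' hg' => ?_⟩ hc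
  · rwa [crossLine_faceZero, Fin.cons_self_tail]
  · rw [crossLine_faceZero] at hg'
    funext j
    simpa [Subtype.restrict, Fin.tail] using
      congrFun (huniq _ hg') ⟨j.1.succ, (Fin.succ_injective _).ne j.2⟩

theorem faceZero_glue_zero (b u w : Bool) (γ₁ γ₂ : Cube (Fin (n + 1)) A) :
    faceZero b (glue 0 (face 0 u γ₁) (face 0 w γ₂)) =
      bif b then faceZero w γ₂ else faceZero u γ₁ := by
  cases b <;> funext g <;> simp [faceZero, glue_face_face_apply, Fin.update_cons_zero]

theorem faceZero_glue_succ (k : Fin n) (b u w : Bool) (γ₁ γ₂ : Cube (Fin (n + 1)) A) :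
    faceZero b (glue k.succ (face k.succ u γ₁) (face k.succ w γ₂)) =
      glue k (face k u (faceZero b γ₁)) (face k w (faceZero b γ₂)) := by
  funext g
  simp [faceZero, glue_face_face_apply, Fin.cons_update]

theorem face_faceZero_eq {k : Fin n} {b u w : Bool} {γ₁ γ₂ : Cube (Fin (n + 1)) A}
    (h : face k.succ u γ₁ = face k.succ w γ₂) :
    face k u (faceZero b γ₁) = face k w (faceZero b γ₂) :=
  face_eq_face_iff.2 fun g => by
    simpa [faceZero, Fin.cons_update] using face_eq_face_iff.1 h (Fin.cons b g)

variable (σ : Signature) [Alg σ A] {R : Set (Cube (Fin n) A)}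

theorem glue_mem_faceZero_preimage {k : Fin (n + 1)} {u w : Bool}
    {γ₁ γ₂ : Cube (Fin (n + 1)) A} (h₁ : ∀ b, faceZero b γ₁ ∈ R) (h₂ : ∀ b, faceZero b γ₂ ∈ R)
    (hsucc : ∀ k' : Fin n, k = k'.succ → ∀ b,
      glue k' (face k' u (faceZero b γ₁)) (face k' w (faceZero b γ₂)) ∈ R) (b : Bool) :
    faceZero b (glue k (face k u γ₁) (face k w γ₂)) ∈ R := by
  cases k using Fin.cases with
  | zero => cases b <;> simp [faceZero_glue_zero, h₁, h₂]
  | succ k' => simpa [faceZero_glue_succ] using hsucc k' rfl b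

theorem isTolerance_faceZero_preimage (hR : IsTolerance σ R) :
    IsTolerance σ {γ | ∀ b, faceZero b γ ∈ R} := by
  refine ⟨fun o γ hγ b => hR.1 o _ fun i => hγ i b, sRefl_iff.2 ?_, sSymm_iff.2 ?_⟩
  · intro k c γ hγ
    exact glue_mem_faceZero_preimage hγ hγ fun k' _ b => sRefl_iff.1 hR.2.1 k' c _ (hγ b)
  · intro k γ hγ
    exact glue_mem_faceZero_preimage hγ hγ fun k' _ b => sSymm_iff.1 hR.2.2 k' _ (hγ b)

theorem isHCongruence_faceZero_preimage (hR : IsHCongruence σ R) :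
    IsHCongruence σ {γ | ∀ b, faceZero b γ ∈ R} := by
  refine ⟨isTolerance_faceZero_preimage σ hR.1, sTrans_iff.2 ?_⟩
  intro k γ₁ hγ₁ γ₂ hγ₂ hface
  refine glue_mem_faceZero_preimage hγ₁ hγ₂ fun k' hk b => ?_
  subst hk
  exact sTrans_iff.1 hR.2 k' _ (hγ₁ b) _ (hγ₂ b) (face_faceZero_eq hface)

theorem faceZero_mem_generators {θ : Fin (n + 2) → Set (A × A)} (hrefl : ∀ a, (a, a) ∈ θ 1)
    {γ : Cube (Fin (n + 2)) A} (hγ : γ ∈ ⋃ i, cubeSet i (θ i)) (b : Bool) :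
    faceZero b γ ∈ ⋃ i : Fin (n + 1), cubeSet i (θ i.succ) := by
  simp only [Set.mem_iUnion, cubeSet, Set.mem_image] at hγ ⊢
  obtain ⟨j, p, hp, rfl⟩ := hγ
  cases j using Fin.cases with
  | zero =>
    refine ⟨0, (bif b then p.2 else p.1, bif b then p.2 else p.1), hrefl _, ?_⟩
    funext g
    simp [cubeAt, faceZero]
  | succ j => exact ⟨j, p, hp, rfl⟩

theorem faceZero_mem_MRel {θ : Fin (n + 2) → Set (A × A)} (hrefl : ∀ a, (a, a) ∈ θ 1)
    {γ : Cube (Fin (n + 2)) A} (hγ : γ ∈ MRel σ θ) (b : Bool) :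
    faceZero b γ ∈ MRel σ fun i : Fin (n + 1) => θ i.succ :=
  tolGen_subset σ (isTolerance_faceZero_preimage σ (isTolerance_tolGen σ _))
    (fun _ hγ' b' => subset_tolGen σ _ (faceZero_mem_generators hrefl hγ' b')) hγ b

theorem faceZero_mem_DeltaRel {θ : Fin (n + 2) → Set (A × A)} (hrefl : ∀ a, (a, a) ∈ θ 1)
    {γ : Cube (Fin (n + 2)) A} (hγ : γ ∈ DeltaRel σ θ) (b : Bool) :
    faceZero b γ ∈ DeltaRel σ fun i : Fin (n + 1) => θ i.succ :=
  congGen_subset σ (isHCongruence_faceZero_preimage σ (isHCongruence_congGen σ _))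
    (fun _ hγ' b' => subset_congGen σ _ (faceZero_mem_generators hrefl hγ' b')) hγ b

end FaceZero

theorem lastIdx_succ (n : ℕ) : (lastIdx (n + 1)).succ = lastIdx (n + 2) :=
  Fin.ext (by simp [lastIdx])

theorem stmt11_general {A : Type u} (σ : Signature) [Alg σ A] (n : ℕ)
    (θ γ : Fin (n + 2) → Set (A × A))
    (hθ : ∀ i, IsCongruence σ (θ i))
    (hle : ∀ i, θ i ⊆ γ i) :
    (hComm σ (n + 2) θ ⊆ ⋂ i, θ i) ∧
    (tcComm σ (n + 2) θ ⊆ ⋂ i, θ i) ∧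
    (hComm σ (n + 2) θ ⊆ hComm σ (n + 2) γ) ∧
    (tcComm σ (n + 2) θ ⊆ tcComm σ (n + 2) γ) ∧
    (hComm σ (n + 2) θ ⊆ hComm σ (n + 1) (fun i : Fin (n + 1) => θ i.succ)) ∧
    (tcComm σ (n + 2) θ ⊆ tcComm σ (n + 1) (fun i : Fin (n + 1) => θ i.succ)) ∧
    (tcComm σ (n + 2) θ ⊆ hComm σ (n + 2) θ) := by
  have hrefl : ∀ a, (a, a) ∈ θ 1 := (hθ 1).1
  have hH_le_meet : hComm σ (n + 2) θ ⊆ ⋂ i, θ i := Set.subset_iInter fun i =>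
    Set.sInter_subset_of_mem
      ⟨hθ i, centrality_of_subset_linesIn (hθ i).1 (hθ i).2.1 (hθ i).2.2.1
        (DeltaRel_subset_linesIn σ hθ i)⟩
  have hTC_le_H : tcComm σ (n + 2) θ ⊆ hComm σ (n + 2) θ :=
    Set.sInter_subset_sInter fun δ hδ => ⟨hδ.1, hδ.2.anti (MRel_subset_DeltaRel σ θ)⟩
  refine ⟨hH_le_meet, hTC_le_H.trans hH_le_meet, ?_, ?_, ?_, ?_, hTC_le_H⟩
  · exact Set.sInter_subset_sInter fun δ hδ => ⟨hδ.1, hδ.2.anti (DeltaRel_mono σ hle)⟩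
  · exact Set.sInter_subset_sInter fun δ hδ => ⟨hδ.1, hδ.2.anti (MRel_mono σ hle)⟩
  · refine Set.sInter_subset_sInter fun δ hδ => ⟨hδ.1, ?_⟩
    rw [← lastIdx_succ]
    exact centrality_of_faceZero (fun _ hγ b => faceZero_mem_DeltaRel σ hrefl hγ b) hδ.2
  · refine Set.sInter_subset_sInter fun δ hδ => ⟨hδ.1, ?_⟩
    rw [← lastIdx_succ]
    exact centrality_of_faceZero (fun _ hγ b => faceZero_mem_MRel σ hrefl hγ b) hδ.2

/-- basic properties of the hypercommutator (and of the term condition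
commutator): bounded by the meet, monotone, dropping the first argument increases the
value, and `[⋯]_TC ≤ [⋯]_H`.  Here the arity is `n + 2 ≥ 2`. -/
theorem stmt11 {A : Type u} (σ : Signature) [Alg σ A] (n : ℕ)
    (θ γ : Fin (n + 2) → Set (A × A))
    (hθ : ∀ i, IsCongruence σ (θ i)) (hγ : ∀ i, IsCongruence σ (γ i))
    (hle : ∀ i, θ i ⊆ γ i) :
    (hComm σ (n + 2) θ ⊆ ⋂ i, θ i) ∧
    (tcComm σ (n + 2) θ ⊆ ⋂ i, θ i) ∧
    (hComm σ (n + 2) θ ⊆ hComm σ (n + 2) γ) ∧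
    (tcComm σ (n + 2) θ ⊆ tcComm σ (n + 2) γ) ∧
    (hComm σ (n + 2) θ ⊆ hComm σ (n + 1) (fun i : Fin (n + 1) => θ i.succ)) ∧
    (tcComm σ (n + 2) θ ⊆ tcComm σ (n + 1) (fun i : Fin (n + 1) => θ i.succ)) ∧
    (tcComm σ (n + 2) θ ⊆ hComm σ (n + 2) θ) :=
  stmt11_general σ n θ γ hθ hle
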